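/- Let I be an instance of SPA-ST that admits a super-stable matching. Then for any two weakly stable matchings M1 and M2 in I, exactly the same students are matched in M1 and M2; consequently |M1| = |M2|. -/

import Mathlib

open scoped Classical

/-- An instance of the Student-Project Allocation problem with lecturer
preferences over students, with Ties (SPA-ST).  `sPref s p q` means student `s`
ranks project `p` at least as highly as project `q` (`p ⪰_s q`); `lPref k t t'`
means lecturer `k` ranks student `t` at least as highly as student `t'`. -/
structure SPAST (S P L : Type) [Fintype S] [Fintype P] [Fintype L]
    [DecidableEq S] [DecidableEq P] [DecidableEq L] where
  /-- the lecturer offering each project -/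
  lec : P → L
  /-- project capacities -/
  c : P → ℕ
  /-- lecturer capacities -/
  d : L → ℕ
  cpos : ∀ p : P, 0 < c p
  dpos : ∀ k : L, 0 < d k
  /-- the set of projects acceptable to each student -/
  acc : S → Finset P
  sPref : S → P → P → Prop
  lPref : L → S → S → Prop
  sRefl : ∀ s : S, ∀ p ∈ acc s, sPref s p p
  sTrans : ∀ s : S, ∀ p ∈ acc s, ∀ q ∈ acc s, ∀ r ∈ acc s,
    sPref s p q → sPref s q r → sPref s p r
  sTotal : ∀ s : S, ∀ p ∈ acc s, ∀ q ∈ acc s, sPref s p q ∨ sPref s q p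
  lRefl : ∀ k : L, ∀ t : S, (∃ p ∈ acc t, lec p = k) → lPref k t t
  lTrans : ∀ k : L, ∀ t1 t2 t3 : S,
    (∃ p ∈ acc t1, lec p = k) → (∃ p ∈ acc t2, lec p = k) → (∃ p ∈ acc t3, lec p = k) →
    lPref k t1 t2 → lPref k t2 t3 → lPref k t1 t3
  lTotal : ∀ k : L, ∀ t1 t2 : S,
    (∃ p ∈ acc t1, lec p = k) → (∃ p ∈ acc t2, lec p = k) →
    lPref k t1 t2 ∨ lPref k t2 t1
  capLB : ∀ p : P, c p ≤ d (lec p)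
  capUB : ∀ k : L, d k ≤ ∑ p ∈ Finset.univ.filter (fun p => lec p = k), c p

namespace SPAST

variable {S P L : Type} [Fintype S] [Fintype P] [Fintype L]
  [DecidableEq S] [DecidableEq P] [DecidableEq L]

/-- `M` is a matching: pairs are acceptable, each student is matched at most once,
and project and lecturer capacities are respected. -/
def IsMatching (I : SPAST S P L) (M : Finset (S × P)) : Prop :=
  (∀ x ∈ M, x.2 ∈ I.acc x.1) ∧
  (∀ s : S, ∀ p q : P, (s, p) ∈ M → (s, q) ∈ M → p = q) ∧
  (∀ p : P, (M.filter (fun x => x.2 = p)).card ≤ I.c p) ∧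
  (∀ k : L, (M.filter (fun x => I.lec x.2 = k)).card ≤ I.d k)

/-- The set `M(p)` of students assigned to project `p` in `M`. -/
def projAsg (M : Finset (S × P)) (p : P) : Finset S :=
  (M.filter (fun x => x.2 = p)).image Prod.fst

/-- The set `M(l_k)` of students assigned to lecturer `k` in `M`. -/
def lecAsg (I : SPAST S P L) (M : Finset (S × P)) (k : L) : Finset S :=
  (M.filter (fun x => I.lec x.2 = k)).image Prod.fst

/-- `t` is a least-preferred (worst) student of lecturer `k` in the set `T`. -/
def WorstIn (I : SPAST S P L) (k : L) (T : Finset S) (t : S) : Prop :=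
  t ∈ T ∧ ∀ t' ∈ T, I.lPref k t' t

/-- `(s, p)` is a super-blocking pair for `M`. -/
def SuperBlocking (I : SPAST S P L) (M : Finset (S × P)) (s : S) (p : P) : Prop :=
  p ∈ I.acc s ∧ (s, p) ∉ M ∧
  (∀ q : P, (s, q) ∈ M → ¬(I.sPref s q p ∧ ¬I.sPref s p q)) ∧
  (((projAsg M p).card < I.c p ∧ (lecAsg I M (I.lec p)).card < I.d (I.lec p)) ∨
   ((projAsg M p).card < I.c p ∧ (lecAsg I M (I.lec p)).card = I.d (I.lec p) ∧
     (s ∈ lecAsg I M (I.lec p) ∨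
      ∃ t : S, WorstIn I (I.lec p) (lecAsg I M (I.lec p)) t ∧ I.lPref (I.lec p) s t)) ∨
   ((projAsg M p).card = I.c p ∧
     ∃ t : S, WorstIn I (I.lec p) (projAsg M p) t ∧ I.lPref (I.lec p) s t))

/-- `(s, p)` is a weakly-blocking pair for `M`. -/
def WeakBlocking (I : SPAST S P L) (M : Finset (S × P)) (s : S) (p : P) : Prop :=
  p ∈ I.acc s ∧ (s, p) ∉ M ∧
  (∀ q : P, (s, q) ∈ M → I.sPref s p q ∧ ¬I.sPref s q p) ∧
  (((projAsg M p).card < I.c p ∧ (lecAsg I M (I.lec p)).card < I.d (I.lec p)) ∨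
   ((projAsg M p).card < I.c p ∧ (lecAsg I M (I.lec p)).card = I.d (I.lec p) ∧
     (s ∈ lecAsg I M (I.lec p) ∨
      ∃ t : S, WorstIn I (I.lec p) (lecAsg I M (I.lec p)) t ∧
        (I.lPref (I.lec p) s t ∧ ¬I.lPref (I.lec p) t s))) ∨
   ((projAsg M p).card = I.c p ∧
     ∃ t : S, WorstIn I (I.lec p) (projAsg M p) t ∧
       (I.lPref (I.lec p) s t ∧ ¬I.lPref (I.lec p) t s)))

/-- `M` is a super-stable matching in `I`. -/
def SuperStable (I : SPAST S P L) (M : Finset (S × P)) : Prop :=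
  I.IsMatching M ∧ ∀ (s : S) (p : P), ¬SuperBlocking I M s p

/-- `M` is a weakly stable matching in `I`. -/
def WeaklyStable (I : SPAST S P L) (M : Finset (S × P)) : Prop :=
  I.IsMatching M ∧ ∀ (s : S) (p : P), ¬WeakBlocking I M s p

/-- `I` is an SPA-S instance: all preference lists are strictly ordered
(the preorders are antisymmetric). -/
def StrictPrefs (I : SPAST S P L) : Prop :=
  (∀ s : S, ∀ p ∈ I.acc s, ∀ q ∈ I.acc s, I.sPref s p q → I.sPref s q p → p = q) ∧
  (∀ k : L, ∀ t t' : S, (∃ p ∈ I.acc t, I.lec p = k) → (∃ p ∈ I.acc t', I.lec p = k) →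
    I.lPref k t t' → I.lPref k t' t → t = t')

/-- `I'` is an SPA-S instance obtained from `I` by breaking the ties. -/
def TieBreaking (I I' : SPAST S P L) : Prop :=
  I'.lec = I.lec ∧ I'.c = I.c ∧ I'.d = I.d ∧ I'.acc = I.acc ∧
  StrictPrefs I' ∧
  (∀ (s : S) (p q : P), I.sPref s p q → ¬I.sPref s q p →
    I'.sPref s p q ∧ ¬I'.sPref s q p) ∧
  (∀ (k : L) (t t' : S), I.lPref k t t' → ¬I.lPref k t' t →
    I'.lPref k t t' ∧ ¬I'.lPref k t' t)

end SPAST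

/-
Fix a super-stable `M` and a weakly stable `M'`. Let `A` be the pairs of `M' \ M` whose student
does not strictly prefer her `M`-project, and `B` the pairs of `M \ M'` whose student strictly
prefers them to her `M'`-project (an unmatched student qualifies vacuously). Such pairs block
neither matching, so each is kept out by a full project or a full lecturer. One lecturer cannot
keep out an `A`-pair `(u, q)` and a `B`-pair `(w, p)` with `p = q`, or with `p` and `q` both
undersubscribed: `M` then forces `w` strictly above `u`, while `M'` forces `u` at least as high
as `w`. Counting project by project within each lecturer gives `|A| + |B| ≤ |M' \ M|` and,
symmetrically, `|A| + |B| ≤ |M \ M'|`. Every pair of `M \ M'` outside `B` shares its student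
with an `A`-pair, so a student matched in `M'` but not in `M` would give `|M \ M'| < |A| + |B|`;
symmetrically for the other direction.
-/

open Finset

theorem Finset.filter_sdiff {α : Type*} [DecidableEq α] (p : α → Prop) [DecidablePred p]
    (s t : Finset α) : (s \ t).filter p = s.filter p \ t.filter p := by
  ext x
  simp only [mem_filter, mem_sdiff]
  tauto

theorem Finset.card_add_card_le_card_sdiff {α : Type*} [DecidableEq α] {X Y A B : Finset α}
    (hA : A ⊆ Y \ X) (hB : B ⊆ X \ Y) (h : B.Nonempty → A = ∅ ∧ #X ≤ #Y) :
    #A + #B ≤ #(Y \ X) := by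
  rcases B.eq_empty_or_nonempty with rfl | hne
  · simpa using card_le_card hA
  · obtain ⟨rfl, hXY⟩ := h hne
    calc #(∅ : Finset α) + #B = #B := zero_add _
      _ ≤ #(X \ Y) := card_le_card hB
      _ ≤ #(Y \ X) := card_sdiff_le_card_sdiff_iff.2 hXY

theorem Finset.card_lt_card_add_card_of_forall_mem_or {α β : Type*} [DecidableEq α]
    [DecidableEq β] (f : α → β) {C A B : Finset α} (hf : Set.InjOn f C)
    (hcover : ∀ x ∈ C, x ∈ A ∨ ∃ y ∈ B, f y = f x) {b₀ : α} (hb₀ : b₀ ∈ B)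
    (hb₀C : ∀ x ∈ C, f x ≠ f b₀) : #C < #A + #B := by
  have hsub : C.image f ⊆ A.image f ∪ (B.erase b₀).image f := by
    intro _ hy
    obtain ⟨x, hx, rfl⟩ := mem_image.1 hy
    rcases hcover x hx with hxA | ⟨y, hyB, hyx⟩
    · exact mem_union_left _ (mem_image_of_mem f hxA)
    · refine mem_union_right _ (mem_image.2 ⟨y, mem_erase.2 ⟨?_, hyB⟩, hyx⟩)
      rintro rfl
      exact hb₀C x hx hyx.symm
  calc #C = #(C.image f) := (card_image_of_injOn hf).symm
    _ ≤ #(A.image f) + #((B.erase b₀).image f) := (card_le_card hsub).trans (card_union_le _ _)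
    _ ≤ #A + #(B.erase b₀) := add_le_add card_image_le card_image_le
    _ < #A + #B := by
      have := card_pos.2 ⟨b₀, hb₀⟩
      rw [card_erase_of_mem hb₀]
      omega

theorem Finset.card_filter_apply_snd_eq_sum {α β γ : Type*} [Fintype β] [DecidableEq β]
    [DecidableEq γ] (N : Finset (α × β)) (f : β → γ) (c : γ) :
    #{x ∈ N | f x.2 = c} = ∑ b with f b = c, #{x ∈ N | x.2 = b} := by
  rw [card_eq_sum_card_fiberwise (f := Prod.snd) (t := {b | f b = c})
    fun x hx => by simpa using (mem_filter.1 hx).2]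
  refine sum_congr rfl fun b hb => congrArg card ?_
  rw [filter_filter]
  refine filter_congr fun x _ => ⟨And.right, fun hx => ⟨?_, hx⟩⟩
  rw [hx]
  exact (mem_filter.1 hb).2

theorem Finset.card_eq_sum_sum_fiberwise_snd {α β γ : Type*} [Fintype β] [DecidableEq β]
    [Fintype γ] [DecidableEq γ] (N : Finset (α × β)) (f : β → γ) :
    #N = ∑ c, ∑ b with f b = c, #{x ∈ N | x.2 = b} := by
  rw [sum_fiberwise univ f, card_eq_sum_card_fiberwise fun x _ => mem_univ x.2]

namespace SPAST

section Projects

variable {S P : Type} [DecidableEq S] [DecidableEq P] {M : Finset (S × P)}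

theorem mem_projAsg {s : S} {p : P} : s ∈ projAsg M p ↔ (s, p) ∈ M := by
  simp [projAsg]

theorem card_projAsg (p : P) : #(projAsg M p) = #{x ∈ M | x.2 = p} :=
  card_image_of_injOn fun _ hx _ hy hxy =>
    Prod.ext hxy ((mem_filter.1 hx).2.trans (mem_filter.1 hy).2.symm)

end Projects

variable {S P L : Type} [Fintype S] [Fintype P] [Fintype L]
  [DecidableEq S] [DecidableEq P] [DecidableEq L]

section Assignments

variable {I : SPAST S P L} {M : Finset (S × P)}

theorem mem_lecAsg {s : S} {k : L} : s ∈ lecAsg I M k ↔ ∃ p, (s, p) ∈ M ∧ I.lec p = k := by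
  simp [lecAsg]

theorem IsMatching.eq_of_mem (hM : I.IsMatching M) {s : S} {p q : P} (hp : (s, p) ∈ M)
    (hq : (s, q) ∈ M) : p = q :=
  hM.2.1 s p q hp hq

theorem IsMatching.injOn_fst (hM : I.IsMatching M) : Set.InjOn Prod.fst (M : Set (S × P)) :=
  fun _ hx _ hy hxy => Prod.ext hxy (hM.eq_of_mem hx (hxy ▸ hy))

theorem IsMatching.card_lecAsg (hM : I.IsMatching M) (k : L) :
    #(lecAsg I M k) = #{x ∈ M | I.lec x.2 = k} :=
  card_image_of_injOn (hM.injOn_fst.mono (filter_subset _ M))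

theorem IsMatching.card_projAsg_le (hM : I.IsMatching M) (p : P) : #(projAsg M p) ≤ I.c p :=
  (card_projAsg p).trans_le (hM.2.2.1 p)

theorem IsMatching.card_lecAsg_le (hM : I.IsMatching M) (k : L) : #(lecAsg I M k) ≤ I.d k :=
  (hM.card_lecAsg k).trans_le (hM.2.2.2 k)

theorem projAsg_subset_lecAsg (p : P) : projAsg M p ⊆ lecAsg I M (I.lec p) :=
  fun _ hs => mem_lecAsg.2 ⟨p, mem_projAsg.1 hs, rfl⟩

theorem IsMatching.card_eq_of_matched_iff {M' : Finset (S × P)} (hM : I.IsMatching M)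
    (hM' : I.IsMatching M') (h : ∀ s, (∃ p, (s, p) ∈ M) ↔ ∃ p, (s, p) ∈ M') :
    #M = #M' := by
  have himage : M.image Prod.fst = M'.image Prod.fst := by
    ext s
    simpa using h s
  rw [← card_image_of_injOn hM.injOn_fst, himage, card_image_of_injOn hM'.injOn_fst]

end Assignments

section WorstStudents

def Ranks (I : SPAST S P L) (k : L) (t : S) : Prop := ∃ p ∈ I.acc t, I.lec p = k

variable {I : SPAST S P L} {k : L}

theorem IsMatching.ranks_of_mem_lecAsg {M : Finset (S × P)} (hM : I.IsMatching M) {t : S}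
    (ht : t ∈ lecAsg I M k) : I.Ranks k t := by
  obtain ⟨p, htp, rfl⟩ := mem_lecAsg.1 ht
  exact ⟨p, hM.1 _ htp, rfl⟩

theorem exists_worstIn {T : Finset S} (hT : T.Nonempty) (hrank : ∀ t ∈ T, I.Ranks k t) :
    ∃ t, I.WorstIn k T t := by
  induction hT using Finset.Nonempty.cons_induction with
  | singleton a =>
    exact ⟨a, mem_singleton_self a, by simpa using I.lRefl k a (hrank a (mem_singleton_self a))⟩
  | cons a T _ _ ih =>
    simp only [mem_cons, forall_eq_or_imp] at hrank
    obtain ⟨t, htT, hworst⟩ := ih hrank.2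
    rcases I.lTotal k a t hrank.1 (hrank.2 t htT) with hat | hta
    · exact ⟨t, mem_cons_of_mem htT, (forall_mem_cons _ _).2 ⟨hat, hworst⟩⟩
    · refine ⟨a, mem_cons_self a T,
        (forall_mem_cons _ _).2 ⟨I.lRefl k a hrank.1, fun t' ht' => ?_⟩⟩
      exact I.lTrans k t' t a (hrank.2 t' ht') (hrank.2 t htT) hrank.1 (hworst t' ht') hta

theorem exists_worstIn_and {M : Finset (S × P)} (hM : I.IsMatching M) {T : Finset S}
    (hT : T ⊆ lecAsg I M k) {R : S → S → Prop} {s t : S}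
    (hR : ∀ w t', I.Ranks k w → I.Ranks k t' → R s w → I.lPref k w t' → R s t')
    (ht : t ∈ T) (hst : R s t) : ∃ t₀, I.WorstIn k T t₀ ∧ R s t₀ := by
  have hrank : ∀ t ∈ T, I.Ranks k t := fun t ht => hM.ranks_of_mem_lecAsg (hT ht)
  obtain ⟨t₀, ht₀⟩ := exists_worstIn ⟨t, ht⟩ hrank
  exact ⟨t₀, ht₀, hR t t₀ (hrank t ht) (hrank t₀ ht₀.1) hst (ht₀.2 t ht)⟩

end WorstStudents

section Admission

/-- Clause (b) shared by super-blocking and weakly-blocking pairs; `R s t` compares `s` with a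
worst assigned student `t` of `l(p)`. -/
def Admits (I : SPAST S P L) (M : Finset (S × P)) (R : S → S → Prop) (s : S) (p : P) : Prop :=
  (#(projAsg M p) < I.c p ∧ #(lecAsg I M (I.lec p)) < I.d (I.lec p)) ∨
  (#(projAsg M p) < I.c p ∧ #(lecAsg I M (I.lec p)) = I.d (I.lec p) ∧
    (s ∈ lecAsg I M (I.lec p) ∨ ∃ t, I.WorstIn (I.lec p) (lecAsg I M (I.lec p)) t ∧ R s t)) ∨
  (#(projAsg M p) = I.c p ∧ ∃ t, I.WorstIn (I.lec p) (projAsg M p) t ∧ R s t)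

variable {I : SPAST S P L} {M : Finset (S × P)} {R : S → S → Prop} {s : S} {p : P}

theorem IsMatching.card_lecAsg_eq_of_not_admits (hM : I.IsMatching M) (h : ¬I.Admits M R s p)
    (hp : #(projAsg M p) < I.c p) : #(lecAsg I M (I.lec p)) = I.d (I.lec p) :=
  (hM.card_lecAsg_le _).eq_of_not_lt fun hk => h (Or.inl ⟨hp, hk⟩)

theorem IsMatching.not_rel_of_not_admits (hM : I.IsMatching M) (h : ¬I.Admits M R s p)
    (hR : ∀ w t, I.Ranks (I.lec p) w → I.Ranks (I.lec p) t → R s w → I.lPref (I.lec p) w t →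
      R s t)
    {t : S} {p' : P} (ht : (t, p') ∈ M) (hlec : I.lec p' = I.lec p)
    (hp' : p' = p ∨ #(projAsg M p) < I.c p) : ¬R s t := by
  intro hst
  rcases (hM.card_projAsg_le p).lt_or_eq with hlt | hfull
  · have htk : t ∈ lecAsg I M (I.lec p) := mem_lecAsg.2 ⟨p', ht, hlec⟩
    obtain ⟨t₀, hworst, hst₀⟩ := exists_worstIn_and hM subset_rfl hR htk hst
    exact h (Or.inr (Or.inl
      ⟨hlt, hM.card_lecAsg_eq_of_not_admits h hlt, Or.inr ⟨t₀, hworst, hst₀⟩⟩))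
  · rw [hp'.resolve_right hfull.not_lt] at ht
    obtain ⟨t₀, hworst, hst₀⟩ :=
      exists_worstIn_and hM (projAsg_subset_lecAsg p) hR (mem_projAsg.2 ht) hst
    exact h (Or.inr (Or.inr ⟨hfull, t₀, hworst, hst₀⟩))

end Admission

section Exchange

variable (I : SPAST S P L)

/-- `A ⊆ Y \ X` and `B ⊆ X \ Y` are pairs kept out of `X`, resp. `Y`, by a full project or a
full lecturer, and no lecturer keeps out an `A`-pair and a `B`-pair on common grounds (the same
project, or two undersubscribed projects). -/
structure Rivals (X Y A B : Finset (S × P)) : Prop where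
  subset_left : A ⊆ Y \ X
  subset_right : B ⊆ X \ Y
  lec_full_left : ∀ a ∈ A, #(projAsg X a.2) < I.c a.2 →
    #(lecAsg I X (I.lec a.2)) = I.d (I.lec a.2)
  lec_full_right : ∀ b ∈ B, #(projAsg Y b.2) < I.c b.2 →
    #(lecAsg I Y (I.lec b.2)) = I.d (I.lec b.2)
  conflict : ∀ a ∈ A, ∀ b ∈ B, I.lec a.2 = I.lec b.2 →
    a.2 = b.2 ∨ (#(projAsg X a.2) < I.c a.2 ∧ #(projAsg Y b.2) < I.c b.2) → False

variable {I} {X Y A B : Finset (S × P)}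

theorem Rivals.symm (h : I.Rivals X Y A B) : I.Rivals Y X B A where
  subset_left := h.subset_right
  subset_right := h.subset_left
  lec_full_left := h.lec_full_right
  lec_full_right := h.lec_full_left
  conflict b hb a ha hlec hab := h.conflict a ha b hb hlec.symm (hab.imp Eq.symm And.symm)

theorem Rivals.card_filter_snd_add_le (h : I.Rivals X Y A B) (hX : I.IsMatching X) {p : P}
    (hp : ∀ b ∈ B, b.2 = p → I.c p ≤ #(projAsg Y p)) :
    #{a ∈ A | a.2 = p} + #{b ∈ B | b.2 = p} ≤ #{x ∈ Y \ X | x.2 = p} := by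
  rw [filter_sdiff]
  refine card_add_card_le_card_sdiff ?_ ?_ fun ⟨b, hb⟩ => ⟨?_, ?_⟩
  · exact (filter_subset_filter _ h.subset_left).trans (filter_sdiff _ _ _).subset
  · exact (filter_subset_filter _ h.subset_right).trans (filter_sdiff _ _ _).subset
  · obtain ⟨hbB, rfl⟩ := mem_filter.1 hb
    refine eq_empty_of_forall_notMem fun a ha => ?_
    obtain ⟨haA, hab⟩ := mem_filter.1 ha
    exact h.conflict a haA b hbB (congrArg I.lec hab) (Or.inl hab)
  · obtain ⟨hbB, rfl⟩ := mem_filter.1 hb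
    rw [← card_projAsg, ← card_projAsg]
    exact (hX.card_projAsg_le _).trans (hp b hbB rfl)

theorem Rivals.sum_card_le (h : I.Rivals X Y A B) (hX : I.IsMatching X)
    (hY : I.IsMatching Y) (k : L) :
    ∑ p with I.lec p = k, (#{a ∈ A | a.2 = p} + #{b ∈ B | b.2 = p}) ≤
      ∑ p with I.lec p = k, #{x ∈ Y \ X | x.2 = p} := by
  by_cases hk : ∃ b ∈ B, I.lec b.2 = k ∧ #(projAsg Y b.2) < I.c b.2
  · obtain ⟨b, hbB, rfl, hb⟩ := hk
    have hYfull := h.lec_full_right b hbB hb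
    have hAfull : ∀ a ∈ A, I.lec a.2 = I.lec b.2 → I.c a.2 ≤ #(projAsg X a.2) :=
      fun a haA hab => not_lt.1 fun ha => h.conflict a haA b hbB hab (Or.inr ⟨ha, hb⟩)
    calc ∑ p with I.lec p = I.lec b.2, (#{a ∈ A | a.2 = p} + #{b ∈ B | b.2 = p})
        ≤ ∑ p with I.lec p = I.lec b.2, #{x ∈ X \ Y | x.2 = p} := by
          refine sum_le_sum fun p hp => ?_
          rw [add_comm]
          refine h.symm.card_filter_snd_add_le hY fun a haA hap => ?_
          subst hap
          exact hAfull a haA (mem_filter.1 hp).2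
      _ = #{x ∈ X \ Y | I.lec x.2 = I.lec b.2} := (card_filter_apply_snd_eq_sum _ _ _).symm
      _ ≤ #{x ∈ Y \ X | I.lec x.2 = I.lec b.2} := by
          rw [filter_sdiff, filter_sdiff, card_sdiff_le_card_sdiff_iff, ← hX.card_lecAsg,
            ← hY.card_lecAsg, hYfull]
          exact hX.card_lecAsg_le _
      _ = ∑ p with I.lec p = I.lec b.2, #{x ∈ Y \ X | x.2 = p} := card_filter_apply_snd_eq_sum _ _ _
  · simp only [not_exists, not_and, not_lt] at hk
    refine sum_le_sum fun p hp => h.card_filter_snd_add_le hX fun b hbB hbp => ?_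
    subst hbp
    exact hk b hbB (mem_filter.1 hp).2

theorem Rivals.card_add_card_le (h : I.Rivals X Y A B) (hX : I.IsMatching X)
    (hY : I.IsMatching Y) : #A + #B ≤ #(Y \ X) := by
  rw [card_eq_sum_sum_fiberwise_snd A I.lec, card_eq_sum_sum_fiberwise_snd B I.lec,
    card_eq_sum_sum_fiberwise_snd (Y \ X) I.lec, ← sum_add_distrib]
  exact sum_le_sum fun k _ => (sum_add_distrib).symm.trans_le (h.sum_card_le hX hY k)

/-- Otherwise `#(X \ Y) < #B + #A`, since every pair of `X \ Y` outside `B` shares its student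
with an `A`-pair other than `a`. -/
theorem Rivals.matched_of_mem_left (h : I.Rivals X Y A B) (hX : I.IsMatching X)
    (hY : I.IsMatching Y) (hcover : ∀ x ∈ X \ Y, x ∈ B ∨ ∃ y ∈ A, y.1 = x.1) {a : S × P}
    (ha : a ∈ A) : ∃ p, (a.1, p) ∈ X := by
  by_contra hs
  simp only [not_exists] at hs
  refine not_lt.2 (h.symm.card_add_card_le hY hX) (card_lt_card_add_card_of_forall_mem_or
    Prod.fst (hX.injOn_fst.mono sdiff_subset) hcover ha fun x hx hxa => hs x.2 ?_)
  rw [← show x.1 = a.1 from hxa]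
  exact (mem_sdiff.1 hx).1

end Exchange

section Stability

def NoWorse (I : SPAST S P L) (M : Finset (S × P)) (s : S) (p : P) : Prop :=
  ∀ q, (s, q) ∈ M → ¬(I.sPref s q p ∧ ¬I.sPref s p q)

def Better (I : SPAST S P L) (M : Finset (S × P)) (s : S) (p : P) : Prop :=
  ∀ q, (s, q) ∈ M → I.sPref s p q ∧ ¬I.sPref s q p

variable {I : SPAST S P L} {M M' : Finset (S × P)}

theorem SuperStable.not_admits (hM : I.SuperStable M) {s : S} {p : P} (hp : p ∈ I.acc s)
    (hsp : (s, p) ∉ M) (h : I.NoWorse M s p) : ¬I.Admits M (I.lPref (I.lec p)) s p :=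
  fun hadm => hM.2 s p ⟨hp, hsp, h, hadm⟩

theorem WeaklyStable.not_admits (hM : I.WeaklyStable M) {s : S} {p : P} (hp : p ∈ I.acc s)
    (hsp : (s, p) ∉ M) (h : I.Better M s p) :
    ¬I.Admits M (fun a b => I.lPref (I.lec p) a b ∧ ¬I.lPref (I.lec p) b a) s p :=
  fun hadm => hM.2 s p ⟨hp, hsp, h, hadm⟩

theorem SuperStable.not_lPref_of_mem (hM : I.SuperStable M) {s : S} {p : P} (hp : p ∈ I.acc s)
    (hsp : (s, p) ∉ M) (h : I.NoWorse M s p) {t : S} {p' : P} (ht : (t, p') ∈ M)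
    (hlec : I.lec p' = I.lec p) (hp' : p' = p ∨ #(projAsg M p) < I.c p) :
    ¬I.lPref (I.lec p) s t :=
  hM.1.not_rel_of_not_admits (hM.not_admits hp hsp h)
    (fun w t hw ht => I.lTrans _ s w t ⟨p, hp, rfl⟩ hw ht) ht hlec hp'

theorem WeaklyStable.lPref_of_mem (hM : I.WeaklyStable M) {s : S} {p : P} (hp : p ∈ I.acc s)
    (hsp : (s, p) ∉ M) (h : I.Better M s p) {t : S} {p' : P} (ht : (t, p') ∈ M)
    (hlec : I.lec p' = I.lec p) (hp' : p' = p ∨ #(projAsg M p) < I.c p) :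
    I.lPref (I.lec p) t s := by
  have hs : I.Ranks (I.lec p) s := ⟨p, hp, rfl⟩
  have hst := hM.1.not_rel_of_not_admits (hM.not_admits hp hsp h)
    (fun w t hw ht ⟨hsw, hws⟩ hwt =>
      ⟨I.lTrans _ s w t hs hw ht hsw hwt, fun hts => hws (I.lTrans _ w t s hw ht hs hwt hts)⟩)
    ht hlec hp'
  by_contra hts
  exact hst ⟨(I.lTotal _ s t hs ⟨p', hM.1.1 _ ht, hlec⟩).resolve_right hts, hts⟩

theorem rivals_of_superStable_of_weaklyStable (hM : I.SuperStable M) (hM' : I.WeaklyStable M') :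
    I.Rivals M M' {x ∈ M' \ M | I.NoWorse M x.1 x.2} {x ∈ M \ M' | I.Better M' x.1 x.2} := by
  refine ⟨filter_subset _ _, filter_subset _ _, ?_, ?_, ?_⟩ <;>
    simp only [mem_filter, mem_sdiff, and_imp, Prod.forall]
  · exact fun u q huq hqM h =>
      hM.1.card_lecAsg_eq_of_not_admits (hM.not_admits (hM'.1.1 _ huq) hqM h)
  · exact fun w p hwp hpM' h =>
      hM'.1.card_lecAsg_eq_of_not_admits (hM'.not_admits (hM.1.1 _ hwp) hpM' h)
  · intro u q huq hqM hno w p hwp hpM' hbetter hlec hqp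
    refine hM.not_lPref_of_mem (hM'.1.1 _ huq) hqM hno hwp hlec.symm (hqp.imp Eq.symm And.left) ?_
    rw [hlec]
    exact hM'.lPref_of_mem (hM.1.1 _ hwp) hpM' hbetter huq hlec (hqp.imp id And.right)

theorem mem_or_exists_noWorse (hM : I.IsMatching M) {x : S × P} (hx : x ∈ M \ M') :
    x ∈ {x ∈ M \ M' | I.Better M' x.1 x.2} ∨
      ∃ y ∈ {x ∈ M' \ M | I.NoWorse M x.1 x.2}, y.1 = x.1 := by
  obtain ⟨hxM, hxM'⟩ := mem_sdiff.1 hx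
  by_cases hbetter : I.Better M' x.1 x.2
  · exact Or.inl (mem_filter.2 ⟨hx, hbetter⟩)
  obtain ⟨r, hr, hxr⟩ : ∃ r, (x.1, r) ∈ M' ∧ ¬(I.sPref x.1 x.2 r ∧ ¬I.sPref x.1 r x.2) := by
    simpa [Better] using hbetter
  have hrM : (x.1, r) ∉ M := fun hrM => hxM' (by rwa [hM.eq_of_mem hrM hxM] at hr)
  refine Or.inr ⟨(x.1, r), mem_filter.2 ⟨mem_sdiff.2 ⟨hr, hrM⟩, fun q hq => ?_⟩, rfl⟩
  rwa [hM.eq_of_mem hq hxM]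

theorem mem_or_exists_better (hM' : I.IsMatching M') {x : S × P} (hx : x ∈ M' \ M) :
    x ∈ {x ∈ M' \ M | I.NoWorse M x.1 x.2} ∨
      ∃ y ∈ {x ∈ M \ M' | I.Better M' x.1 x.2}, y.1 = x.1 := by
  obtain ⟨hxM', hxM⟩ := mem_sdiff.1 hx
  by_cases hnoWorse : I.NoWorse M x.1 x.2
  · exact Or.inl (mem_filter.2 ⟨hx, hnoWorse⟩)
  obtain ⟨r, hr, hrx⟩ : ∃ r, (x.1, r) ∈ M ∧ I.sPref x.1 r x.2 ∧ ¬I.sPref x.1 x.2 r := by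
    simpa [NoWorse] using hnoWorse
  have hrM' : (x.1, r) ∉ M' := fun hrM' => hxM (by rwa [hM'.eq_of_mem hrM' hxM'] at hr)
  refine Or.inr ⟨(x.1, r), mem_filter.2 ⟨mem_sdiff.2 ⟨hr, hrM'⟩, fun q hq => ?_⟩, rfl⟩
  rwa [hM'.eq_of_mem hq hxM']

theorem matched_iff_of_superStable_of_weaklyStable (hM : I.SuperStable M)
    (hM' : I.WeaklyStable M') (s : S) : (∃ p, (s, p) ∈ M') ↔ ∃ p, (s, p) ∈ M := by
  have hR := rivals_of_superStable_of_weaklyStable hM hM'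
  constructor
  · rintro ⟨q, hq⟩
    by_contra hs
    refine hs (hR.matched_of_mem_left hM.1 hM'.1 (fun x hx => mem_or_exists_noWorse hM.1 hx)
      (a := (s, q)) (mem_filter.2 ⟨mem_sdiff.2 ⟨hq, fun hqM => hs ⟨q, hqM⟩⟩, ?_⟩))
    exact fun r hr => absurd ⟨r, hr⟩ hs
  · rintro ⟨p, hp⟩
    by_contra hs
    refine hs (hR.symm.matched_of_mem_left hM'.1 hM.1 (fun x hx => mem_or_exists_better hM'.1 hx)
      (a := (s, p)) (mem_filter.2 ⟨mem_sdiff.2 ⟨hp, fun hpM' => hs ⟨p, hpM'⟩⟩, ?_⟩))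
    exact fun r hr => absurd ⟨r, hr⟩ hs

end Stability

end SPAST

open SPAST in
theorem weakly_stable_same_matched_students_and_card {S P L : Type} [Fintype S] [Fintype P] [Fintype L]
    [DecidableEq S] [DecidableEq P] [DecidableEq L]
    (I : SPAST S P L) (hss : ∃ M : Finset (S × P), SuperStable I M)
    (M1 M2 : Finset (S × P)) (h1 : WeaklyStable I M1) (h2 : WeaklyStable I M2) :
    (∀ s : S, (∃ p : P, (s, p) ∈ M1) ↔ (∃ p : P, (s, p) ∈ M2)) ∧
      M1.card = M2.card := by
  obtain ⟨M, hM⟩ := hss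
  have hmatched : ∀ s, (∃ p, (s, p) ∈ M1) ↔ ∃ p, (s, p) ∈ M2 := fun s =>
    (matched_iff_of_superStable_of_weaklyStable hM h1 s).trans
      (matched_iff_of_superStable_of_weaklyStable hM h2 s).symm
  exact ⟨hmatched, h1.1.card_eq_of_matched_iff h2.1 hmatched⟩
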